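/- Suppose at some time τ ≥ 0 we have R(τ) < 1, and let v(τ) be the normalized left Perron eigenvector of H(s(τ))B_f - D_f. Then for all t ≥ τ, v(τ)^T z(t) ≤ v(τ)^T z(τ) e^{λ_max(τ)(t-τ)}, where λ_max(τ) < 0; in particular v(τ)^T z(t) is monotonically decreasing and converges exponentially to zero. -/

import Mathlib

open Matrix BigOperators Set

noncomputable def specRad {N : Type*} [Fintype N] [DecidableEq N] (M : Matrix N N ℝ) : ℝ :=
  sSup {r : ℝ | ∃ μ ∈ spectrum ℂ (M.map (Complex.ofReal ·)), r = ‖μ‖}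

noncomputable def lamMax {N : Type*} [Fintype N] [DecidableEq N] (M : Matrix N N ℝ) : ℝ :=
  sSup {r : ℝ | ∃ μ ∈ spectrum ℂ (M.map (Complex.ofReal ·)), r = μ.re}

def Irred {N : Type*} [Fintype N] [DecidableEq N] (M : Matrix N N ℝ) : Prop :=
  ∀ i j : N, ∃ k : ℕ, 0 < (M ^ k) i j

/-!
Put `A(t) = H(s(t)) B_f - D_f` and `μ = λ_max(τ)`. If `μ ≥ 0`, then `w = D_f v` is a nonzero
nonnegative vector with `wᵀ ≤ wᵀ M` for the nonnegative matrix `M = H(s(τ)) D_f⁻¹ B_f`, hence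
`wᵀ ≤ wᵀ Mᵏ → 0` because `ρ(M) < 1` (Gelfand's formula); so `μ < 0`. As `s` is nonincreasing and
`v, z ≥ 0`, `y(t) = vᵀ z(t)` satisfies `y' = vᵀ A(t) z ≤ vᵀ A(τ) z = μ y` for `t ≥ τ`, and
Grönwall's inequality gives `y(t) ≤ y(τ) e^{μ (t - τ)}`.
-/

open Filter Topology

theorem tendsto_pow_nhds_zero_of_spectralRadius_lt_one {A : Type*} [NormedRing A]
    [NormedAlgebra ℂ A] [CompleteSpace A] {a : A} (ha : spectralRadius ℂ a < 1) :
    Tendsto (a ^ ·) atTop (𝓝 0) := by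
  obtain ⟨r, hρr, hr1⟩ := ENNReal.lt_iff_exists_nnreal_btwn.1 ha
  have hroot : ∀ᶠ k : ℕ in atTop, (‖a ^ k‖₊ : ENNReal) ^ (1 / k : ℝ) < r :=
    (spectrum.pow_nnnorm_pow_one_div_tendsto_nhds_spectralRadius a).eventually_lt_const hρr
  refine squeeze_zero_norm' ?_ (tendsto_pow_atTop_nhds_zero_of_lt_one r.coe_nonneg
    (by exact_mod_cast hr1))
  filter_upwards [hroot, eventually_ge_atTop 1] with k hk hk1
  have hk0 : (k : ℝ) ≠ 0 := by positivity
  have : (‖a ^ k‖₊ : ENNReal) ≤ (r : ENNReal) ^ (k : ℝ) := by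
    calc (‖a ^ k‖₊ : ENNReal) = ((‖a ^ k‖₊ : ENNReal) ^ (1 / k : ℝ)) ^ (k : ℝ) := by
          rw [← ENNReal.rpow_mul, one_div, inv_mul_cancel₀ hk0, ENNReal.rpow_one]
      _ ≤ (r : ENNReal) ^ (k : ℝ) := ENNReal.rpow_le_rpow hk.le (by positivity)
  rw [ENNReal.rpow_natCast, ← ENNReal.coe_pow, ENNReal.coe_le_coe] at this
  exact_mod_cast this

section Spectral

attribute [local instance] Matrix.linftyOpNormedRing Matrix.linftyOpNormedAlgebra

variable {N : Type*} [Fintype N] [DecidableEq N]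

theorem spectralRadius_map_ofReal_le_specRad (M : Matrix N N ℝ) :
    spectralRadius ℂ (M.map (Complex.ofReal ·)) ≤ ENNReal.ofReal (specRad M) := by
  have : CompleteSpace (Matrix N N ℂ) := FiniteDimensional.complete ℂ _
  have hK := (spectrum.isCompact (M.map (Complex.ofReal ·))).image (continuous_norm (E := ℂ))
  have hbdd : BddAbove {r : ℝ | ∃ μ ∈ spectrum ℂ (M.map (Complex.ofReal ·)), r = ‖μ‖} := by
    refine hK.bddAbove.mono ?_
    rintro _ ⟨μ, hμ, rfl⟩
    exact ⟨μ, hμ, rfl⟩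
  refine iSup₂_le fun μ hμ => ?_
  rw [← ENNReal.ofReal_coe_nnreal, coe_nnnorm]
  exact ENNReal.ofReal_le_ofReal (le_csSup hbdd ⟨μ, hμ, rfl⟩)

theorem tendsto_pow_apply_nhds_zero_of_specRad_lt_one {M : Matrix N N ℝ} (hM : specRad M < 1)
    (i j : N) : Tendsto (fun k : ℕ => (M ^ k) i j) atTop (𝓝 0) := by
  have : CompleteSpace (Matrix N N ℂ) := FiniteDimensional.complete ℂ _
  have hρ : spectralRadius ℂ (M.map (Complex.ofReal ·)) < 1 :=
    (spectralRadius_map_ofReal_le_specRad M).trans_lt (by simpa using hM)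
  have hentry : Tendsto (fun k : ℕ => (M.map (Complex.ofReal ·) ^ k) i j) atTop (𝓝 0) :=
    (continuous_id.matrix_elem i j).tendsto' _ _ rfl |>.comp
      (tendsto_pow_nhds_zero_of_spectralRadius_lt_one hρ)
  have hpow : ∀ k, M.map (Complex.ofReal ·) ^ k = (M ^ k).map (Complex.ofReal ·) :=
    fun k => (map_pow Complex.ofRealHom.mapMatrix M k).symm
  simp only [hpow, Matrix.map_apply] at hentry
  exact Filter.tendsto_ofReal_iff.1 (by simpa using hentry)

end Spectral

section Perron

variable {N : Type*} [Fintype N] [DecidableEq N]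

theorem le_vecMul_pow_of_le_vecMul {M : Matrix N N ℝ} (hM : ∀ i j, 0 ≤ M i j) {w : N → ℝ}
    (hw : w ≤ w ᵥ* M) (k : ℕ) : w ≤ w ᵥ* (M ^ k) := by
  induction k with
  | zero => simp
  | succ k ih =>
    calc w ≤ w ᵥ* M := hw
      _ ≤ (w ᵥ* M ^ k) ᵥ* M := fun j =>
          dotProduct_le_dotProduct_of_nonneg_right ih fun i => hM i j
      _ = w ᵥ* M ^ (k + 1) := by rw [vecMul_vecMul, pow_succ]

theorem eq_zero_of_le_vecMul_of_specRad_lt_one {M : Matrix N N ℝ} (hM : ∀ i j, 0 ≤ M i j)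
    (hR : specRad M < 1) {w : N → ℝ} (hw0 : 0 ≤ w) (hw : w ≤ w ᵥ* M) : w = 0 := by
  funext j
  have hlim : Tendsto (fun k : ℕ => (w ᵥ* M ^ k) j) atTop (𝓝 0) := by
    simpa [vecMul, dotProduct] using tendsto_finsetSum Finset.univ fun i _ =>
      (tendsto_pow_apply_nhds_zero_of_specRad_lt_one hR i j).const_mul (w i)
  exact le_antisymm (ge_of_tendsto' hlim fun k => le_vecMul_pow_of_le_vecMul hM hw k j) (hw0 j)

theorem eigenvalue_neg_of_specRad_lt_one {h d : N → ℝ} {B : Matrix N N ℝ} (hh : 0 ≤ h)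
    (hd : ∀ i, 0 < d i) (hB : ∀ i j, 0 ≤ B i j)
    (hR : specRad (diagonal h * (diagonal d)⁻¹ * B) < 1) {v : N → ℝ} (hv0 : 0 ≤ v)
    (hv : v ≠ 0) {μ : ℝ} (hμ : v ᵥ* (diagonal h * B - diagonal d) = μ • v) : μ < 0 := by
  by_contra! hμ0
  have hdinv : (diagonal d)⁻¹ = diagonal d⁻¹ := by
    refine inv_eq_right_inv ?_
    rw [diagonal_mul_diagonal, ← diagonal_one]
    congr 1
    funext i
    exact mul_inv_cancel₀ (hd i).ne'
  set M := diagonal h * (diagonal d)⁻¹ * B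
  have hM : ∀ i j, 0 ≤ M i j := fun i j => by
    simpa [M, hdinv, diagonal_mul] using
      mul_nonneg (mul_nonneg (hh i) (inv_pos.2 (hd i)).le) (hB i j)
  set w := v ᵥ* diagonal d
  have hwM : w ᵥ* M = μ • v + w := by
    have : diagonal d * M = diagonal h * B := by
      simp only [M, hdinv, ← mul_assoc, diagonal_mul_diagonal]
      congr 2
      funext i
      simp only [Pi.inv_apply]
      field_simp [(hd i).ne']
    rw [vecMul_vecMul, this, ← hμ, vecMul_sub, sub_add_cancel]
  have hw0 : 0 ≤ w := fun j => by
    simpa [w, vecMul_diagonal] using mul_nonneg (hv0 j) (hd j).le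
  have hw : w ≤ w ᵥ* M := by
    rw [hwM]
    exact le_add_of_nonneg_left (smul_nonneg hμ0 hv0)
  apply hv
  funext j
  have := congrFun (eq_zero_of_le_vecMul_of_specRad_lt_one hM hR hw0 hw) j
  simpa [w, vecMul_diagonal, (hd j).ne'] using this

end Perron

section Decay

variable {y y' : ℝ → ℝ} {μ τ : ℝ}

theorem le_mul_exp_of_hasDerivAt_le (hy : ∀ t, HasDerivAt y (y' t) t)
    (hle : ∀ t, τ ≤ t → y' t ≤ μ * y t) {t : ℝ} (ht : τ ≤ t) :
    y t ≤ y τ * Real.exp (μ * (t - τ)) := by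
  have := le_gronwallBound_of_liminf_deriv_right_le (ε := 0) (b := t)
    (fun x _ => (hy x).continuousAt.continuousWithinAt)
    (fun x _ _ hr => (hy x).hasDerivWithinAt.liminf_right_slope_le hr) le_rfl
    (fun x hx => by simpa using hle x hx.1) t ⟨ht, le_rfl⟩
  rwa [gronwallBound_ε0] at this

theorem antitoneOn_of_hasDerivAt_le_mul (hμ : μ ≤ 0) (hy0 : ∀ t, 0 ≤ y t)
    (hy : ∀ t, HasDerivAt y (y' t) t) (hle : ∀ t, τ ≤ t → y' t ≤ μ * y t) :
    AntitoneOn y (Ici τ) :=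
  antitoneOn_of_hasDerivWithinAt_nonpos (convex_Ici τ)
    (fun x _ => (hy x).continuousAt.continuousWithinAt) (fun x _ => (hy x).hasDerivWithinAt)
    fun x hx => (hle x (interior_subset hx)).trans (mul_nonpos_of_nonpos_of_nonneg hμ (hy0 x))

theorem tendsto_zero_of_le_mul_exp {C : ℝ} (hμ : μ < 0) (hy0 : ∀ t, 0 ≤ y t)
    (hle : ∀ t, τ ≤ t → y t ≤ C * Real.exp (μ * (t - τ))) : Tendsto y atTop (𝓝 0) := by
  have hexp : Tendsto (fun t => C * Real.exp (μ * (t - τ))) atTop (𝓝 0) := by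
    have hlin : Tendsto (fun t => μ * (t - τ)) atTop atBot :=
      (tendsto_atTop_add_const_right _ (-τ) tendsto_id).const_mul_atTop_of_neg hμ
    simpa using (Real.tendsto_exp_atBot.comp hlin).const_mul C
  exact squeeze_zero' (Eventually.of_forall hy0) (eventually_ge_atTop τ |>.mono hle) hexp

end Decay

section Comparison

variable {N : Type*} [Fintype N]

theorem hasDerivAt_const_dotProduct {z : ℝ → N → ℝ} {z' : N → ℝ} {t : ℝ} (v : N → ℝ)
    (hz : ∀ j, HasDerivAt (fun σ => z σ j) (z' j) t) :
    HasDerivAt (fun σ => v ⬝ᵥ z σ) (v ⬝ᵥ z') t :=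
  HasDerivAt.fun_sum fun j _ => (hz j).const_mul (v j)

theorem dotProduct_mulVec_le_dotProduct_mulVec {M : Type*} [Fintype M] {R : Type*} [Semiring R]
    [PartialOrder R] [IsOrderedRing R] {A A' : Matrix M N R} (hA : ∀ i j, A i j ≤ A' i j)
    {v : M → R} {z : N → R} (hv : 0 ≤ v) (hz : 0 ≤ z) : v ⬝ᵥ A *ᵥ z ≤ v ⬝ᵥ A' *ᵥ z :=
  dotProduct_le_dotProduct_of_nonneg_left
    (fun i => dotProduct_le_dotProduct_of_nonneg_right (fun j => hA i j) hz) hv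

theorem diagonal_mul_sub_diagonal_apply_le [DecidableEq N] {a b d : N → ℝ} {B : Matrix N N ℝ}
    (hB : ∀ i j, 0 ≤ B i j) (hab : a ≤ b) (i j : N) :
    (diagonal a * B - diagonal d) i j ≤ (diagonal b * B - diagonal d) i j := by
  simp only [Matrix.sub_apply, diagonal_mul]
  gcongr
  exacts [hB i j, hab i]

end Comparison

theorem weighted_average_exponential_decay_general (n m : ℕ)
    (Bf : Matrix (Fin n ⊕ Fin m) (Fin n ⊕ Fin m) ℝ) (d : Fin n ⊕ Fin m → ℝ)
    (hBf : ∀ i j, 0 ≤ Bf i j) (hd : ∀ i, 0 < d i)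
    (s : ℝ → Fin n → ℝ) (z : ℝ → (Fin n ⊕ Fin m) → ℝ)
    (hzdyn : ∀ j t, HasDerivAt (fun σ => z σ j)
      (((Matrix.fromBlocks (Matrix.diagonal (s t)) 0 0 (1 : Matrix (Fin m) (Fin m) ℝ) * Bf
          - Matrix.diagonal d).mulVec (z t)) j) t)
    (hznn : ∀ t j, 0 ≤ z t j)
    (hsnn : ∀ t i, 0 ≤ s t i)
    (hsmono : ∀ i, ∀ t₁ t₂ : ℝ, t₁ ≤ t₂ → s t₂ i ≤ s t₁ i)
    (τ : ℝ)
    (hR : specRad (Matrix.fromBlocks (Matrix.diagonal (s τ)) 0 0 (1 : Matrix (Fin m) (Fin m) ℝ)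
        * (Matrix.diagonal d)⁻¹ * Bf) < 1)
    (v : Fin n ⊕ Fin m → ℝ)
    (hv : ∀ j, 0 ≤ v j) (hvnorm : ∑ j, v j = 1)
    (hveig : Matrix.vecMul v
        (Matrix.fromBlocks (Matrix.diagonal (s τ)) 0 0 (1 : Matrix (Fin m) (Fin m) ℝ) * Bf
          - Matrix.diagonal d)
      = lamMax (Matrix.fromBlocks (Matrix.diagonal (s τ)) 0 0 (1 : Matrix (Fin m) (Fin m) ℝ) * Bf
          - Matrix.diagonal d) • v) :
    lamMax (Matrix.fromBlocks (Matrix.diagonal (s τ)) 0 0 (1 : Matrix (Fin m) (Fin m) ℝ) * Bf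
        - Matrix.diagonal d) < 0 ∧
    (∀ t : ℝ, τ ≤ t → v ⬝ᵥ z t ≤ (v ⬝ᵥ z τ) *
      Real.exp (lamMax (Matrix.fromBlocks (Matrix.diagonal (s τ)) 0 0
        (1 : Matrix (Fin m) (Fin m) ℝ) * Bf - Matrix.diagonal d) * (t - τ))) ∧
    (∀ t₁ t₂ : ℝ, τ ≤ t₁ → t₁ ≤ t₂ → v ⬝ᵥ z t₂ ≤ v ⬝ᵥ z t₁) ∧
    Filter.Tendsto (fun t => v ⬝ᵥ z t) Filter.atTop (nhds 0) := by
  have hH : ∀ t, Matrix.fromBlocks (Matrix.diagonal (s t)) 0 0 (1 : Matrix (Fin m) (Fin m) ℝ) =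
      Matrix.diagonal (Sum.elim (s t) 1) := fun t => by
    rw [← diagonal_one, fromBlocks_diagonal]
    rfl
  simp only [hH] at hzdyn hR hveig ⊢
  set μ := lamMax (Matrix.diagonal (Sum.elim (s τ) 1) * Bf - Matrix.diagonal d)
  have hμ : μ < 0 := eigenvalue_neg_of_specRad_lt_one
    (by rintro (i | i); exacts [hsnn τ i, zero_le_one]) hd hBf hR hv
    (by rintro rfl; simp at hvnorm) hveig
  set y := fun t => v ⬝ᵥ z t
  have hy0 : ∀ t, 0 ≤ y t := fun t => dotProduct_nonneg_of_nonneg hv (hznn t)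
  have hy : ∀ t, HasDerivAt y
      (v ⬝ᵥ (Matrix.diagonal (Sum.elim (s t) 1) * Bf - Matrix.diagonal d) *ᵥ z t) t :=
    fun t => hasDerivAt_const_dotProduct v (hzdyn · t)
  have hle : ∀ t, τ ≤ t →
      v ⬝ᵥ (Matrix.diagonal (Sum.elim (s t) 1) * Bf - Matrix.diagonal d) *ᵥ z t ≤ μ * y t :=
    fun t ht =>
    calc _ ≤ v ⬝ᵥ (Matrix.diagonal (Sum.elim (s τ) 1) * Bf - Matrix.diagonal d) *ᵥ z t :=
          dotProduct_mulVec_le_dotProduct_mulVec (diagonal_mul_sub_diagonal_apply_le hBf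
            (by rintro (i | i); exacts [hsmono i τ t ht, le_rfl])) hv (hznn t)
      _ = μ * y t := by rw [dotProduct_mulVec, hveig, smul_dotProduct, smul_eq_mul]
  have hexp : ∀ t, τ ≤ t → y t ≤ y τ * Real.exp (μ * (t - τ)) :=
    fun t => le_mul_exp_of_hasDerivAt_le hy hle
  exact ⟨hμ, hexp, fun t₁ t₂ h₁ h₂ => antitoneOn_of_hasDerivAt_le_mul hμ.le hy0 hy hle h₁
    (mem_Ici.2 (h₁.trans h₂)) h₂, tendsto_zero_of_le_mul_exp hμ hy0 hexp⟩

/-- Corollary 1: once R(τ) < 1, the weighted average v(τ)ᵀz(t) decays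
monotonically and exponentially to zero for t ≥ τ. -/
theorem weighted_average_exponential_decay (n m : ℕ)
    (Bf : Matrix (Fin n ⊕ Fin m) (Fin n ⊕ Fin m) ℝ) (d : Fin n ⊕ Fin m → ℝ)
    (hBf : ∀ i j, 0 ≤ Bf i j) (hBfirr : Irred Bf) (hd : ∀ i, 0 < d i)
    (s : ℝ → Fin n → ℝ) (z : ℝ → (Fin n ⊕ Fin m) → ℝ)
    (hzdyn : ∀ j t, HasDerivAt (fun σ => z σ j)
      (((Matrix.fromBlocks (Matrix.diagonal (s t)) 0 0 (1 : Matrix (Fin m) (Fin m) ℝ) * Bf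
          - Matrix.diagonal d).mulVec (z t)) j) t)
    (hznn : ∀ t j, 0 ≤ z t j)
    (hsnn : ∀ t i, 0 ≤ s t i)
    (hsmono : ∀ i, ∀ t₁ t₂ : ℝ, t₁ ≤ t₂ → s t₂ i ≤ s t₁ i)
    (τ : ℝ) (hτ : 0 ≤ τ)
    (hR : specRad (Matrix.fromBlocks (Matrix.diagonal (s τ)) 0 0 (1 : Matrix (Fin m) (Fin m) ℝ)
        * (Matrix.diagonal d)⁻¹ * Bf) < 1)
    (v : Fin n ⊕ Fin m → ℝ)
    (hv : ∀ j, 0 ≤ v j) (hvnorm : ∑ j, v j = 1)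
    (hveig : Matrix.vecMul v
        (Matrix.fromBlocks (Matrix.diagonal (s τ)) 0 0 (1 : Matrix (Fin m) (Fin m) ℝ) * Bf
          - Matrix.diagonal d)
      = lamMax (Matrix.fromBlocks (Matrix.diagonal (s τ)) 0 0 (1 : Matrix (Fin m) (Fin m) ℝ) * Bf
          - Matrix.diagonal d) • v) :
    lamMax (Matrix.fromBlocks (Matrix.diagonal (s τ)) 0 0 (1 : Matrix (Fin m) (Fin m) ℝ) * Bf
        - Matrix.diagonal d) < 0 ∧
    (∀ t : ℝ, τ ≤ t → v ⬝ᵥ z t ≤ (v ⬝ᵥ z τ) *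
      Real.exp (lamMax (Matrix.fromBlocks (Matrix.diagonal (s τ)) 0 0
        (1 : Matrix (Fin m) (Fin m) ℝ) * Bf - Matrix.diagonal d) * (t - τ))) ∧
    (∀ t₁ t₂ : ℝ, τ ≤ t₁ → t₁ ≤ t₂ → v ⬝ᵥ z t₂ ≤ v ⬝ᵥ z t₁) ∧
    Filter.Tendsto (fun t => v ⬝ᵥ z t) Filter.atTop (nhds 0) :=
  weighted_average_exponential_decay_general n m Bf d hBf hd s z hzdyn hznn hsnn hsmono τ hR v hv
    hvnorm hveig
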